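/- arXiv:2507.14424 — 3 statements merged into one kernel-verified Lean document; each statement's English description precedes it below -/
import Mathlib

section
/- Let S be a Noetherian ring and Q a primary ideal of S whose radical is a principal prime ideal (q) with ⋂_{α ≥ 0} (q^α) = 0. Then Q = (q^α) for some positive integer α; in particular Q is principal. -/
/-!
If `Q ⊆ (q^α)` but `Q ⊄ (q^(α+1))`, some `x = q^α s ∈ Q` has `s ∉ (q) = √Q`, so
primarity forces `q^α ∈ Q` and hence `Q = (q^α)`. Climbing from `Q ⊆ (q)`, this must
happen by the time the exponent reaches an `n` with `q^n ∈ Q`, because `(q^n) ⊆ Q`.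
-/

namespace Ideal.IsPrimary

variable {R : Type*} [CommSemiring R] {Q : Ideal R} {q : R}

theorem eq_span_singleton_pow_of_le_of_not_le (hQ : Q.IsPrimary) (hrad : Q.radical = span {q})
    {α : ℕ} (hle : Q ≤ span {q} ^ α) (hnot : ¬ Q ≤ span {q} ^ (α + 1)) :
    Q = span {q} ^ α := by
  obtain ⟨x, hxQ, hx⟩ := SetLike.not_le_iff_exists.mp hnot
  obtain ⟨s, rfl⟩ : q ^ α ∣ x := by
    simpa only [span_singleton_pow, mem_span_singleton] using hle hxQ
  have hs : s ∉ Q.radical := by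
    rintro hs
    rw [hrad, mem_span_singleton] at hs
    obtain ⟨t, rfl⟩ := hs
    apply hx
    rw [span_singleton_pow, mem_span_singleton, pow_succ, ← mul_assoc]
    exact dvd_mul_right _ _
  have hqα : q ^ α ∈ Q := ((isPrimary_iff.mp hQ).2 hxQ).resolve_right hs
  exact le_antisymm hle (by rwa [span_singleton_pow, span_singleton_le_iff_mem])

theorem le_span_singleton_pow_or_exists_eq (hQ : Q.IsPrimary) (hrad : Q.radical = span {q})
    (k : ℕ) : Q ≤ span {q} ^ (k + 1) ∨ ∃ α, 0 < α ∧ Q = span {q} ^ α := by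
  induction k with
  | zero => exact .inl (by rw [zero_add, pow_one, ← hrad]; exact le_radical)
  | succ k ih =>
    rcases ih with hle | hdone
    · by_cases hnext : Q ≤ span {q} ^ (k + 1 + 1)
      · exact .inl hnext
      · exact .inr ⟨k + 1, k.succ_pos, hQ.eq_span_singleton_pow_of_le_of_not_le hrad hle hnext⟩
    · exact .inr hdone

theorem exists_eq_span_singleton_pow (hQ : Q.IsPrimary) (hrad : Q.radical = span {q}) :
    ∃ α, 0 < α ∧ Q = span {q} ^ α := by
  obtain ⟨n, hn⟩ : q ∈ Q.radical := hrad ▸ mem_span_singleton_self q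
  have hpow : span {q} ^ (n + 1) ≤ Q := by
    rw [span_singleton_pow, span_singleton_le_iff_mem, pow_succ]
    exact Q.mul_mem_right q hn
  rcases hQ.le_span_singleton_pow_or_exists_eq hrad n with hle | hdone
  · exact ⟨n + 1, n.succ_pos, le_antisymm hle hpow⟩
  · exact hdone

end Ideal.IsPrimary

theorem stmt_9_general (S : Type) [CommRing S]
    (Q : Ideal S) (hQ : Q.IsPrimary) (q : S)
    (hrad : Q.radical = Ideal.span {q}) :
    (∃ α : ℕ, 0 < α ∧ Q = (Ideal.span {q} : Ideal S) ^ α) ∧ Q.IsPrincipal := by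
  obtain ⟨α, hα, hQα⟩ := hQ.exists_eq_span_singleton_pow hrad
  refine ⟨⟨α, hα, hQα⟩, ?_⟩
  rw [hQα, Ideal.span_singleton_pow]
  exact ⟨⟨q ^ α, rfl⟩⟩

/-- Let `S` be Noetherian and `Q` a primary ideal whose radical is a
principal prime `(q)` with `⋂_{α} (q)^α = 0`. Then `Q = (q)^α` for some `α > 0`; in
particular `Q` is principal. -/
theorem stmt_9 (S : Type) [CommRing S] [IsNoetherianRing S]
    (Q : Ideal S) (hQ : Q.IsPrimary) (q : S)
    (hrad : Q.radical = Ideal.span {q}) (hprime : (Ideal.span {q} : Ideal S).IsPrime)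
    (hint : (⨅ α : ℕ, (Ideal.span {q} : Ideal S) ^ α) = ⊥) :
    (∃ α : ℕ, 0 < α ∧ Q = (Ideal.span {q} : Ideal S) ^ α) ∧ Q.IsPrincipal :=
  stmt_9_general S Q hQ q hrad
end

section
/- Let S be a Noetherian ring, I ⊆ S an ideal all of whose associated primes have height one, and suppose S is a local UFD with ⋂_{α≥0} p^α = 0 for each height-one prime p. Then I is a principal ideal. -/
/-!
Noetherian induction on `I`. An associated prime `p` of `S ⧸ I` has height one, so in the UFD `S`
it is principal, `p = (π)`. As `I ⊆ (π)`, we get `I = π · (I : π)`, and the determinant trick in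
the domain `S` shows `I ⊊ (I : π)`. Multiplication by `π` embeds `S ⧸ (I : π)` into `S ⧸ I`, so
`(I : π)` again has only height-one associated primes and is principal by induction; hence so is
`I = π · (I : π)`.
-/

namespace Ideal

variable {R : Type*} [CommRing R]

theorem le_of_mem_associatedPrimes_quotient {I p : Ideal R}
    (hp : p ∈ associatedPrimes R (R ⧸ I)) : I ≤ p := by
  simpa [Submodule.annihilator_top, annihilator_quotient] using hp.annihilator_le

theorem span_singleton_mul_colon_span_singleton {I : Ideal R} {a : R} (h : I ≤ span {a}) :
    span {a} * I.colon (span {a}) = I := by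
  refine le_antisymm (span_singleton_mul_le_iff.2 fun x hx => ?_) fun x hx => ?_
  · simpa [mul_comm] using mem_colon_span_singleton.1 hx
  · obtain ⟨y, rfl⟩ := mem_span_singleton'.1 (h hx)
    exact mul_comm y a ▸ mul_mem_mul (mem_span_singleton_self a)
      (mem_colon_span_singleton.2 hx)

theorem eq_bot_of_le_span_singleton_mul [IsDomain R] {I : Ideal R} (hI : I.FG) {a : R}
    (ha : ¬IsUnit a) (h : I ≤ span {a} * I) : I = ⊥ := by
  obtain ⟨r, hr1, hr⟩ := Submodule.exists_sub_one_mem_and_smul_eq_zero_of_fg_of_le_smul _ I hI h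
  by_contra hI0
  obtain ⟨x, hx, hx0⟩ := Submodule.exists_mem_ne_zero_of_ne_bot hI0
  have hr0 : r = 0 := (mul_eq_zero.1 (hr x hx)).resolve_right hx0
  refine ha (isUnit_of_dvd_one ?_)
  simpa [hr0, mem_span_singleton] using hr1

theorem lt_colon_span_singleton [IsDomain R] {I : Ideal R} (hI : I.FG) (hI0 : I ≠ ⊥) {a : R}
    (ha : ¬IsUnit a) (h : I ≤ span {a}) : I < I.colon (span {a}) := by
  refine lt_of_le_of_ne (fun x hx => mem_colon_span_singleton.2 (I.mul_mem_right a hx))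
    fun heq => hI0 (eq_bot_of_le_span_singleton_mul hI ha ?_)
  conv_rhs => rw [heq, span_singleton_mul_colon_span_singleton h]

theorem associatedPrimes_quotient_colon_subset (I : Ideal R) (a : R) :
    associatedPrimes R (R ⧸ I.colon (span {a})) ⊆ associatedPrimes R (R ⧸ I) := by
  let mulA : R →ₗ[R] R ⧸ I := I.mkQ ∘ₗ LinearMap.mulRight R a
  have hker : LinearMap.ker mulA = I.colon (span {a}) := by
    ext x
    simp only [mulA, LinearMap.mem_ker, LinearMap.comp_apply, LinearMap.mulRight_apply,
      Submodule.mkQ_apply, Submodule.Quotient.mk_eq_zero, mem_colon_span_singleton]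
  exact associatedPrimes.subset_of_injective
    (LinearMap.ker_eq_bot.1 (Submodule.ker_liftQ_eq_bot' _ mulA hker.symm))

end Ideal

theorem stmt_11_general (S : Type) [CommRing S] [IsDomain S] [UniqueFactorizationMonoid S]
    [IsNoetherianRing S]
    (I : Ideal S)
    (hass : ∀ p ∈ associatedPrimes S (S ⧸ I),
      ∃ h : p.IsPrime, Order.height (⟨p, h⟩ : PrimeSpectrum S) = 1) :
    I.IsPrincipal := by
  induction I using IsNoetherian.induction with
  | hgt I ih =>
  by_cases hbot : I = ⊥
  · exact hbot ▸ bot_isPrincipal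
  by_cases htop : I = ⊤
  · exact htop ▸ top_isPrincipal
  have : Nontrivial (S ⧸ I) := Ideal.Quotient.nontrivial_iff.mpr htop
  obtain ⟨p, hp⟩ := associatedPrimes.nonempty S (S ⧸ I)
  obtain ⟨hprime, hht⟩ := hass p hp
  obtain ⟨π, rfl⟩ := (UniqueFactorizationMonoid.isPrincipal_of_height_eq_one
    ((PrimeSpectrum.height_eq_orderHeight ⟨p, hprime⟩).trans hht)).principal
  have hIπ : I ≤ Ideal.span {π} := Ideal.le_of_mem_associatedPrimes_quotient hp
  have hπ : ¬IsUnit π := mt Ideal.span_singleton_eq_top.2 hprime.ne_top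
  obtain ⟨g, hg⟩ := ih _ (Ideal.lt_colon_span_singleton (IsNoetherian.noetherian I) hbot hπ hIπ)
    fun q hq => hass q (Ideal.associatedPrimes_quotient_colon_subset I π hq)
  refine ⟨π * g, ?_⟩
  rw [← Ideal.span_singleton_mul_colon_span_singleton hIπ, hg, Ideal.submodule_span_eq,
    Ideal.span_singleton_mul_span_singleton, Ideal.submodule_span_eq]

/-- Let `S` be a Noetherian local UFD in which `⋂_α p^α = 0` for each
height-one prime `p`, and let `I` be an ideal all of whose associated primes have height
one. Then `I` is principal. -/
theorem stmt_11 (S : Type) [CommRing S] [IsDomain S] [UniqueFactorizationMonoid S]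
    [IsNoetherianRing S] [IsLocalRing S]
    (hpow : ∀ p : Ideal S, ∀ h : p.IsPrime,
      Order.height (⟨p, h⟩ : PrimeSpectrum S) = 1 → (⨅ α : ℕ, p ^ α) = ⊥)
    (I : Ideal S)
    (hass : ∀ p ∈ associatedPrimes S (S ⧸ I),
      ∃ h : p.IsPrime, Order.height (⟨p, h⟩ : PrimeSpectrum S) = 1) :
    I.IsPrincipal :=
  stmt_11_general S I hass
end

section
/- Let R be a Cohen-Macaulay local ring with canonical module and M a finitely generated R-module with FID hull 0 → M → Y' → X' → 0 (Y' of finite injective dimension, X' MCM or zero). If E is the injective hull of M and Ω = E/M the first cosyzygy, then there is a short exact sequence 0 → Y' → X' ⊕ E → Ω → 0. -/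
open CategoryTheory IsLocalRing

noncomputable section

/-- The `n`-th Ext group of two `R`-modules, as an object of `ModuleCat R`. -/
abbrev ExtMod (R : Type) [CommRing R] (n : ℕ) (M N : Type) [AddCommGroup M] [Module R M]
    [AddCommGroup N] [Module R N] : ModuleCat R :=
  ((Ext R (ModuleCat.{0} R) n).obj (Opposite.op (ModuleCat.of R M))).obj (ModuleCat.of R N)

/-- Depth of a module over a local ring, defined as the least `i` such that
`Ext^i(k, M) ≠ 0` where `k` is the residue field. -/
noncomputable def eDepth (R : Type) [CommRing R] [IsLocalRing R]
    (M : Type) [AddCommGroup M] [Module R M] : ℕ∞ :=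
  sInf {n : ℕ∞ | ∃ i : ℕ, n = i ∧ Nontrivial (ExtMod R i (ResidueField R) M)}

/-- Krull dimension of a module: the Krull dimension of its support. -/
noncomputable def mDim (R : Type) [CommRing R] (M : Type) [AddCommGroup M] [Module R M] :
    WithBot ℕ∞ :=
  Order.krullDim (Module.support R M)

/-- `N` has finite injective dimension over `R`: for some `n`, `Ext^i(-, N) = 0` for all `i > n`. -/
def HasFID (R : Type) [CommRing R] (N : Type) [AddCommGroup N] [Module R N] : Prop :=
  ∃ n : ℕ, ∀ i : ℕ, n < i → ∀ M : ModuleCat.{0} R, Subsingleton (ExtMod R i M N)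

/-- A maximal Cohen-Macaulay module: finitely generated with depth equal to `dim R`. -/
def IsMCM (R : Type) [CommRing R] [IsLocalRing R] (M : Type) [AddCommGroup M] [Module R M] :
    Prop :=
  Module.Finite R M ∧ (eDepth R M : WithBot ℕ∞) = ringKrullDim R

/-- `ω` is a canonical module of the Cohen-Macaulay local ring `R`: it is MCM, of finite
injective dimension, and of type one (`Ext^d(k, ω) ≅ k`). -/
def IsCanonicalModule (R : Type) [CommRing R] [IsLocalRing R] (ω : Type) [AddCommGroup ω]
    [Module R ω] : Prop :=
  IsMCM R ω ∧ HasFID R ω ∧ ∃ d : ℕ, ringKrullDim R = d ∧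
    Nonempty ((ExtMod R d (ResidueField R) ω) ≃ₗ[R] ResidueField R)

/-- A (Noetherian) local ring is Gorenstein if it has finite injective dimension over itself. -/
def IsGorensteinLocalRing (A : Type) [CommRing A] : Prop :=
  IsNoetherianRing A ∧ IsLocalRing A ∧ HasFID A A

/-- `R` is generically Gorenstein: the localization at each minimal prime is Gorenstein. -/
def GenericallyGorenstein (R : Type) [CommRing R] : Prop :=
  ∀ p ∈ minimalPrimes R, ∀ hp : p.IsPrime,
    haveI := hp; IsGorensteinLocalRing (Localization p.primeCompl)

/-- Height of an ideal: the infimum of heights of primes containing it. -/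
noncomputable def idealHeight (R : Type) [CommRing R] (I : Ideal R) : ℕ∞ :=
  ⨅ p ∈ {p : PrimeSpectrum R | I ≤ p.asIdeal}, Order.height p

/-!
Since `E` is injective, `e` extends along `ι` to `φ : Y' → E`. Then `y ↦ (π y, φ y)` embeds `Y'`
into `X' × E` (an element of its kernel comes from `M` and is killed by the injective `e`), and its
cokernel is `E ⧸ M` via `(π y, z) ↦ [φ y - z]`, which is well defined because `φ` agrees with `e`
on `M`.
-/

open Function LinearMap

namespace Function.Exact

variable {R M N P Q : Type*} [CommRing R] [AddCommGroup M] [Module R M] [AddCommGroup N]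
  [Module R N] [AddCommGroup P] [Module R P] [AddCommGroup Q] [Module R Q]
  {f : M →ₗ[R] N} {g : N →ₗ[R] P}

noncomputable def descOfSurjective (h : Function.Exact f g) (hg : Surjective g)
    (u : N →ₗ[R] Q) (hu : u ∘ₗ f = 0) : P →ₗ[R] Q :=
  (range f).liftQ u (range_le_ker_iff.mpr hu) ∘ₗ (h.linearEquivOfSurjective hg).symm.toLinearMap

@[simp]
lemma descOfSurjective_apply (h : Function.Exact f g) (hg : Surjective g) (u : N →ₗ[R] Q)
    (hu : u ∘ₗ f = 0) (y : N) : h.descOfSurjective hg u hu (g y) = u y := by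
  simp [descOfSurjective]

end Function.Exact

section PushoutSequence

variable {R M Y X E : Type*} [CommRing R] [AddCommGroup M] [Module R M] [AddCommGroup Y]
  [Module R Y] [AddCommGroup X] [Module R X] [AddCommGroup E] [Module R E]
  {ι : M →ₗ[R] Y} {π : Y →ₗ[R] X} {e : M →ₗ[R] E} {φ : Y →ₗ[R] E}

lemma injective_prod_of_exact_of_injective (hιπ : Function.Exact ι π) (hφ : ∀ m, φ (ι m) = e m)
    (he : Injective e) : Injective (π.prod φ) := by
  rw [← ker_eq_bot, ker_eq_bot']
  intro y hy
  obtain ⟨m, rfl⟩ := (hιπ y).mp congr(($hy).1)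
  have hm : e m = 0 := by rw [← hφ]; exact congr(($hy).2)
  rw [(injective_iff_map_eq_zero e).mp he m hm, map_zero]

noncomputable def pushoutCokernelMap (hιπ : Function.Exact ι π) (hπ : Surjective π)
    (hφ : ∀ m, φ (ι m) = e m) : X × E →ₗ[R] E ⧸ range e :=
  hιπ.descOfSurjective hπ ((range e).mkQ ∘ₗ φ) (by ext m; simp [hφ]) ∘ₗ fst R X E
    - (range e).mkQ ∘ₗ snd R X E

variable (hιπ : Function.Exact ι π) (hπ : Surjective π) (hφ : ∀ m, φ (ι m) = e m)

lemma pushoutCokernelMap_apply (y : Y) (z : E) :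
    pushoutCokernelMap hιπ hπ hφ (π y, z) = (range e).mkQ (φ y - z) := by
  simp [pushoutCokernelMap]

lemma surjective_pushoutCokernelMap : Surjective (pushoutCokernelMap hιπ hπ hφ) := by
  intro w
  obtain ⟨z, rfl⟩ := (range e).mkQ_surjective w
  obtain ⟨y, hy⟩ := hπ 0
  refine ⟨(0, φ y - z), ?_⟩
  rw [← hy, pushoutCokernelMap_apply, sub_sub_cancel]

lemma exact_prod_pushoutCokernelMap :
    Function.Exact (π.prod φ) (pushoutCokernelMap hιπ hπ hφ) := by
  rintro ⟨x, z⟩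
  obtain ⟨y, rfl⟩ := hπ x
  rw [pushoutCokernelMap_apply, Submodule.mkQ_apply, Submodule.Quotient.mk_eq_zero]
  constructor
  · rintro ⟨m, hm⟩
    refine ⟨y - ι m, Prod.ext ?_ ?_⟩
    · simp [hιπ.apply_apply_eq_zero]
    · simp [hφ, hm]
  · rintro ⟨y', hy'⟩
    obtain ⟨hπy, rfl⟩ := Prod.ext_iff.mp hy'
    obtain ⟨m, hm⟩ := (hιπ (y - y')).mp (by simp_all)
    exact ⟨m, by simp [← hφ, hm]⟩

end PushoutSequence

theorem stmt_15_general (R : Type) [CommRing R]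
    (M Y' X' : Type) [AddCommGroup M] [Module R M] [AddCommGroup Y'] [Module R Y']
    [AddCommGroup X'] [Module R X']
    (ι : M →ₗ[R] Y') (π : Y' →ₗ[R] X')
    (hι : Function.Injective ι) (hπ : Function.Surjective π)
    (hexact : LinearMap.range ι = LinearMap.ker π)
    (E : Type) [AddCommGroup E] [Module R E] [Module.Injective R E]
    (e : M →ₗ[R] E) (he : Function.Injective e) :
    ∃ (f : Y' →ₗ[R] (X' × E)) (g : (X' × E) →ₗ[R] (E ⧸ LinearMap.range e)),
      Function.Injective f ∧ Function.Surjective g ∧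
      LinearMap.range f = LinearMap.ker g := by
  have hιπ : Function.Exact ι π := LinearMap.exact_iff.mpr hexact.symm
  obtain ⟨φ, hφ⟩ := Module.Injective.out ι hι e
  exact ⟨π.prod φ, pushoutCokernelMap hιπ hπ hφ, injective_prod_of_exact_of_injective hιπ hφ he,
    surjective_pushoutCokernelMap hιπ hπ hφ,
    (exact_prod_pushoutCokernelMap hιπ hπ hφ).linearMap_ker_eq.symm⟩

/-- Let `R` be Cohen-Macaulay local with canonical module, `M` finitely
generated with FID hull `0 → M → Y' → X' → 0`, `E` the injective hull of `M`, and
`Ω = E/M` the first cosyzygy. Then there is a short exact sequence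
`0 → Y' → X' ⊕ E → Ω → 0`. -/
theorem stmt_15 (R : Type) [CommRing R] [IsLocalRing R] [IsNoetherianRing R]
    (hCM : (eDepth R R : WithBot ℕ∞) = ringKrullDim R)
    (hω : ∃ ω : ModuleCat.{0} R, Module.Finite R ω ∧ IsCanonicalModule R ω)
    (M Y' X' : Type) [AddCommGroup M] [Module R M] [AddCommGroup Y'] [Module R Y']
    [AddCommGroup X'] [Module R X'] [Module.Finite R M]
    (ι : M →ₗ[R] Y') (π : Y' →ₗ[R] X')
    (hι : Function.Injective ι) (hπ : Function.Surjective π)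
    (hexact : LinearMap.range ι = LinearMap.ker π)
    (hY' : HasFID R Y') (hX' : IsMCM R X' ∨ Subsingleton X')
    (E : Type) [AddCommGroup E] [Module R E] [Module.Injective R E]
    (e : M →ₗ[R] E) (he : Function.Injective e)
    (hess : ∀ P : Submodule R E, P ≠ ⊥ → P ⊓ LinearMap.range e ≠ ⊥) :
    ∃ (f : Y' →ₗ[R] (X' × E)) (g : (X' × E) →ₗ[R] (E ⧸ LinearMap.range e)),
      Function.Injective f ∧ Function.Surjective g ∧
      LinearMap.range f = LinearMap.ker g :=
  stmt_15_general R M Y' X' ι π hι hπ hexact E e he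
end
end
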